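/- arXiv:2006.08571 — 4 statements merged into one kernel-verified Lean document; each statement's English description precedes it below -/
import Mathlib

section
/- Let μ, ν be probability measures on finite sets and c a cost function. As ε → 0, the regularized causal optimal transport value K_{c,ε}(μ,ν) (defined as the expected cost under the entropy-regularized optimal causal plan) converges to the unregularized causal optimal transport value K_c(μ,ν) = inf over causal couplings of E^π[c]. -/
open scoped BigOperators

/-- Shannon entropy of a (sub)probability vector on a finite set. -/
noncomputable def shannonEntropy {α : Type*} [Fintype α] (p : α → ℝ) : ℝ :=
  -∑ a, p a * Real.log (p a)

/-- A coupling of `μ` and `ν`. -/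
def IsCouplingOf {A B : Type*} [Fintype A] [Fintype B]
    (μ : A → ℝ) (ν : B → ℝ) (π : A × B → ℝ) : Prop :=
  (∀ p, 0 ≤ π p) ∧ (∀ a, ∑ b, π (a, b) = μ a) ∧ (∀ b, ∑ a, π (a, b) = ν b)

/-- Expected cost `E^π[c]`. -/
noncomputable def expCost {A : Type*} [Fintype A] (π : A → ℝ) (c : A → ℝ) : ℝ :=
  ∑ a, π a * c a

/-- `f` depends only on the coordinates of the path up to (and including) time `t`. -/
def DepOn {Z : Type*} {T : ℕ} (t : ℕ) (f : (Fin T → Z) → ℝ) : Prop :=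
  ∀ z z' : Fin T → Z, (∀ s : Fin T, (s : ℕ) ≤ t → z s = z' s) → f z = f z'

/-- Causality of a coupling on path spaces: for each `t` with `t + 1 < T`,
conditionally on `x_{≤t}`, the past `y_{≤t}` is independent of the whole path `x`. -/
def CausalCoupling {X Y : Type*} {T : ℕ} [Fintype X] [Fintype Y] [DecidableEq X]
    (π : ((Fin T → X) × (Fin T → Y)) → ℝ) : Prop :=
  ∀ t : ℕ, t + 1 < T →
    ∀ f : (Fin T → Y) → ℝ, DepOn t f →
    ∀ g : (Fin T → X) → ℝ, ∀ a : Fin T → X,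
      (∑ p : (Fin T → X) × (Fin T → Y),
          if ∀ s : Fin T, (s : ℕ) ≤ t → p.1 s = a s then π p * f p.2 * g p.1 else 0) *
        (∑ p : (Fin T → X) × (Fin T → Y),
          if ∀ s : Fin T, (s : ℕ) ≤ t → p.1 s = a s then π p else 0)
      = (∑ p : (Fin T → X) × (Fin T → Y),
          if ∀ s : Fin T, (s : ℕ) ≤ t → p.1 s = a s then π p * f p.2 else 0) *
        (∑ p : (Fin T → X) × (Fin T → Y),
          if ∀ s : Fin T, (s : ℕ) ≤ t → p.1 s = a s then π p * g p.1 else 0)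

/-!
Comparing the entropic optimizer with an arbitrary causal coupling `σ` and using
`0 ≤ H ≤ C` gives `E^{π_ε}[c] ≤ E^σ[c] + ε C`, hence `K_c ≤ K_{c,ε} ≤ K_c + ε C`,
and the squeeze theorem concludes.
-/

open Filter Topology

theorem tendsto_sInf_of_mem_of_le_add_mul {f : ℝ → ℝ} {S : Set ℝ} {C : ℝ}
    (hf : ∀ ε > 0, f ε ∈ S) (hle : ∀ ε > 0, ∀ s ∈ S, f ε ≤ s + ε * C) :
    Tendsto f (𝓝[>] 0) (𝓝 (sInf S)) := by
  have hbdd : BddBelow S := ⟨f 1 - C, fun s hs => by linarith [hle 1 one_pos s hs]⟩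
  have hlower : ∀ ε > 0, sInf S ≤ f ε := fun ε hε => csInf_le hbdd (hf ε hε)
  have hupper : ∀ ε > 0, f ε ≤ sInf S + ε * C := fun ε hε => by
    have : f ε - ε * C ≤ sInf S :=
      le_csInf ⟨f 1, hf 1 one_pos⟩ fun s hs => by linarith [hle ε hε s hs]
    linarith
  have hlim : Tendsto (fun ε : ℝ => sInf S + ε * C) (𝓝[>] 0) (𝓝 (sInf S)) := by
    have : Tendsto (fun ε : ℝ => sInf S + ε * C) (𝓝 0) (𝓝 (sInf S + 0 * C)) :=
      (continuous_const.add (continuous_id.mul continuous_const)).tendsto 0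
    simpa using this.mono_left nhdsWithin_le_nhds
  exact tendsto_of_tendsto_of_tendsto_of_le_of_le' tendsto_const_nhds hlim
    (eventually_mem_nhdsWithin.mono hlower) (eventually_mem_nhdsWithin.mono hupper)

theorem le_add_mul_of_sub_mul_le_sub_mul {a b Ha Hb ε C : ℝ} (hε : 0 ≤ ε)
    (hmin : a - ε * Ha ≤ b - ε * Hb) (hHa : Ha ≤ C) (hHb : 0 ≤ Hb) : a ≤ b + ε * C := by
  have h₁ : ε * Ha ≤ ε * C := mul_le_mul_of_nonneg_left hHa hε
  have h₂ : 0 ≤ ε * Hb := mul_nonneg hε hHb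
  linarith

theorem regularized_causal_OT_tendsto_causal_OT_general
    {X Y : Type*} {T : ℕ} [Fintype X] [Fintype Y] [DecidableEq X]
    (μ : (Fin T → X) → ℝ) (ν : (Fin T → Y) → ℝ)
    (c : ((Fin T → X) × (Fin T → Y)) → ℝ)
    -- uniform entropy bound `0 ≤ H(π) ≤ C` over all couplings
    (C : ℝ) (hC : ∀ π, IsCouplingOf μ ν π → 0 ≤ shannonEntropy π ∧ shannonEntropy π ≤ C)
    -- `πm ε` is the optimizer of the entropy-regularized causal problem
    (πm : ℝ → ((Fin T → X) × (Fin T → Y)) → ℝ)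
    (hmem : ∀ ε > (0 : ℝ), IsCouplingOf μ ν (πm ε) ∧ CausalCoupling (πm ε))
    (hmin : ∀ ε > (0 : ℝ), ∀ σ, IsCouplingOf μ ν σ → CausalCoupling σ →
      expCost (πm ε) c - ε * shannonEntropy (πm ε) ≤ expCost σ c - ε * shannonEntropy σ) :
    Filter.Tendsto (fun ε => expCost (πm ε) c) (nhdsWithin 0 (Set.Ioi 0))
      (nhds (sInf ((fun π => expCost π c) ''
        {π | IsCouplingOf μ ν π ∧ CausalCoupling π}))) := by
  refine tendsto_sInf_of_mem_of_le_add_mul (C := C) (fun ε hε => ⟨πm ε, hmem ε hε, rfl⟩) ?_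
  rintro ε hε _ ⟨σ, ⟨hσ, hσK⟩, rfl⟩
  exact le_add_mul_of_sub_mul_le_sub_mul hε.le (hmin ε hε σ hσ hσK)
    (hC _ (hmem ε hε).1).2 (hC σ hσ).1

/-- As `ε → 0⁺`, the regularized causal optimal transport value
`K_{c,ε}(μ,ν) = E^{π^K_{c,ε}}[c]` (the expected cost under the
entropy-regularized optimal causal plan) converges to the unregularized causal
optimal transport value `K_c(μ,ν) = inf_{π causal coupling} E^π[c]`. -/
theorem regularized_causal_OT_tendsto_causal_OT
    {X Y : Type*} {T : ℕ} [Fintype X] [Fintype Y] [DecidableEq X]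
    (μ : (Fin T → X) → ℝ) (ν : (Fin T → Y) → ℝ)
    (hμpos : ∀ x, 0 ≤ μ x) (hμsum : ∑ x, μ x = 1)
    (hνpos : ∀ y, 0 ≤ ν y) (hνsum : ∑ y, ν y = 1)
    (c : ((Fin T → X) × (Fin T → Y)) → ℝ)
    -- uniform entropy bound `0 ≤ H(π) ≤ C` over all couplings
    (C : ℝ) (hC : ∀ π, IsCouplingOf μ ν π → 0 ≤ shannonEntropy π ∧ shannonEntropy π ≤ C)
    -- `πm ε` is the optimizer of the entropy-regularized causal problem
    (πm : ℝ → ((Fin T → X) × (Fin T → Y)) → ℝ)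
    (hmem : ∀ ε > (0 : ℝ), IsCouplingOf μ ν (πm ε) ∧ CausalCoupling (πm ε))
    (hmin : ∀ ε > (0 : ℝ), ∀ σ, IsCouplingOf μ ν σ → CausalCoupling σ →
      expCost (πm ε) c - ε * shannonEntropy (πm ε) ≤ expCost σ c - ε * shannonEntropy σ) :
    Filter.Tendsto (fun ε => expCost (πm ε) c) (nhdsWithin 0 (Set.Ioi 0))
      (nhds (sInf ((fun π => expCost π c) ''
        {π | IsCouplingOf μ ν π ∧ CausalCoupling π}))) :=
  regularized_causal_OT_tendsto_causal_OT_general μ ν c C hC πm hmem hmin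
end

section
/- A coupling π of μ and ν on product path space is causal if and only if E^π[∑_{t=1}^{T-1} h_t(y_{≤t}) ΔM_{t+1}(x_{≤t+1})] = 0 for all bounded continuous adapted test functions h and all bounded continuous μ-martingales M, where ΔM_{t+1} = M_{t+1}(x_{≤t+1}) - M_t(x_{≤t}). -/
open scoped BigOperators

/-- `M` is an adapted `μ`-martingale w.r.t. the canonical filtration:
`M t` depends only on coordinates up to time `t`, and
`E^μ[(M_{t+1} - M_t) φ] = 0` for every `φ` depending only on `x_{≤t}`. -/
def IsMuMartingale {X : Type*} {T : ℕ} [Fintype X]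
    (μ : (Fin T → X) → ℝ) (M : ℕ → (Fin T → X) → ℝ) : Prop :=
  (∀ t : ℕ, DepOn t (M t)) ∧
  ∀ t : ℕ, t + 1 < T → ∀ φ : (Fin T → X) → ℝ, DepOn t φ →
    ∑ x, μ x * φ x * (M (t + 1) x - M t x) = 0


/-!
Write `x_{≤t}` (`pathUpTo t x`) for the past of a path. On each fibre `{x_{≤t} = a_{≤t}}`,
causality is the identity `E^π[f(y) g(x); fibre] = E^π[f(y) | fibre] · E^π[g(x); fibre]`: the
factor `f(y)` may be replaced by its conditional mean `φ(x_{≤t})`. Forwards, this turns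
`E^π[h_t(y) ΔM_{t+1}(x)]` into `E^μ[φ(x_{≤t}) ΔM_{t+1}(x)]`, which vanishes as `M` is a martingale.
Backwards, test with `h_s = 1_{s ≥ t} f` and the Doob martingale `M_s = E^μ[1_{fibre} g | x_{≤s}]`:
the sum telescopes to `E^π[f(y) (M_{T-1} - M_t)] = 0`, where `M_{T-1} = 1_{fibre} g` and
`M_t = 1_{fibre} E^μ[g | fibre]`, and this is the fibre identity.
-/

open Finset

section FiberMean

variable {α β : Type*} [Fintype α] [DecidableEq β]

/-- The `w`-weighted mean of `F` over the fibre `κ ⁻¹' {b}`; junk value `0` on null fibres. -/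
noncomputable def fiberMean (w : α → ℝ) (κ : α → β) (F : α → ℝ) (b : β) : ℝ :=
  (∑ a with κ a = b, w a * F a) / ∑ a with κ a = b, w a

theorem sum_fiber_mul_mul_eq_iff {w : α → ℝ} (hw : ∀ a, 0 ≤ w a) (κ : α → β) (F G : α → ℝ)
    (b : β) :
    (∑ a with κ a = b, w a * F a * G a) * (∑ a with κ a = b, w a) =
        (∑ a with κ a = b, w a * F a) * (∑ a with κ a = b, w a * G a) ↔
      ∑ a with κ a = b, w a * F a * G a = fiberMean w κ F b * ∑ a with κ a = b, w a * G a := by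
  rcases eq_or_ne (∑ a with κ a = b, w a) 0 with hW | hW
  · have hzero : ∀ a ∈ ({a | κ a = b} : Finset α), w a = 0 :=
      (sum_eq_zero_iff_of_nonneg fun a _ => hw a).1 hW
    have hF : ∑ a with κ a = b, w a * F a = 0 :=
      sum_eq_zero fun a ha => by rw [hzero a ha, zero_mul]
    have hFG : ∑ a with κ a = b, w a * F a * G a = 0 :=
      sum_eq_zero fun a ha => by rw [hzero a ha, zero_mul, zero_mul]
    simp [fiberMean, hW, hF, hFG]
  · rw [fiberMean, div_mul_eq_mul_div, eq_div_iff hW]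

theorem sum_mul_mul_eq_sum_fiberMean_mul {w : α → ℝ} {κ : α → β} {F G : α → ℝ}
    (h : ∀ a, ∑ a' with κ a' = κ a, w a' * F a' * G a' =
      fiberMean w κ F (κ a) * ∑ a' with κ a' = κ a, w a' * G a') :
    ∑ a, w a * F a * G a = ∑ a, w a * fiberMean w κ F (κ a) * G a := by
  have hmaps : ∀ a ∈ (univ : Finset α), κ a ∈ univ.image κ :=
    fun a _ => mem_image_of_mem κ (mem_univ a)
  rw [← sum_fiberwise_of_maps_to hmaps, ← sum_fiberwise_of_maps_to hmaps]
  refine sum_congr rfl fun b hb => ?_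
  obtain ⟨a, -, rfl⟩ := mem_image.1 hb
  rw [h a, mul_sum]
  refine sum_congr rfl fun a' ha' => ?_
  rw [(mem_filter.1 ha').2]
  ring

theorem sum_fiberMean_mul_of_fiberwise_const {w : α → ℝ} (hw : ∀ a, 0 ≤ w a) {κ : α → β}
    {G : α → ℝ} (hG : ∀ a a', κ a' = κ a → G a' = G a) (F : α → ℝ) :
    ∑ a, w a * fiberMean w κ F (κ a) * G a = ∑ a, w a * F a * G a := by
  refine (sum_mul_mul_eq_sum_fiberMean_mul fun a => ?_).symm
  refine (sum_fiber_mul_mul_eq_iff hw κ F G (κ a)).1 ?_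
  have hFG : ∑ a' with κ a' = κ a, w a' * F a' * G a' =
      (∑ a' with κ a' = κ a, w a' * F a') * G a := by
    rw [sum_mul]
    exact sum_congr rfl fun a' ha' => by rw [hG a a' (mem_filter.1 ha').2]
  have hG' : ∑ a' with κ a' = κ a, w a' * G a' = (∑ a' with κ a' = κ a, w a') * G a := by
    rw [sum_mul]
    exact sum_congr rfl fun a' ha' => by rw [hG a a' (mem_filter.1 ha').2]
  rw [hFG, hG']
  ring

theorem fiberMean_ite_eq (w : α → ℝ) (κ : α → β) (F : α → ℝ) (b c : β) :
    fiberMean w κ (fun a => if κ a = b then F a else 0) c =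
      if c = b then fiberMean w κ F b else 0 := by
  unfold fiberMean
  split_ifs with hc
  · subst hc
    congr 1
    exact sum_congr rfl fun a ha => by simp [(mem_filter.1 ha).2]
  · rw [sum_eq_zero fun a ha => by simp [(mem_filter.1 ha).2, hc], zero_div]

theorem fiberMean_of_injective {w : α → ℝ} {κ : α → β} (hκ : Function.Injective κ) (F : α → ℝ)
    {a : α} (ha : w a ≠ 0) : fiberMean w κ F (κ a) = F a := by
  have hfiber : ({a' | κ a' = κ a} : Finset α) = {a} := by
    ext
    simp [hκ.eq_iff]
  rw [fiberMean, hfiber, sum_singleton, sum_singleton, mul_div_cancel_left₀ _ ha]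

end FiberMean

section Marginal

variable {A B : Type*} [Fintype A] [Fintype B] {π : A × B → ℝ} {μ : A → ℝ}

theorem sum_mul_fst_of_marginal (hπμ : ∀ a, ∑ b, π (a, b) = μ a) (G : A → ℝ) :
    ∑ p, π p * G p.1 = ∑ a, μ a * G a := by
  simp_rw [Fintype.sum_prod_type, ← hπμ, sum_mul]

theorem sum_filter_mul_fst_of_marginal (hπμ : ∀ a, ∑ b, π (a, b) = μ a) (P : A → Prop)
    [DecidablePred P] (G : A → ℝ) :
    ∑ p with P p.1, π p * G p.1 = ∑ a with P a, μ a * G a := by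
  simpa only [sum_filter, mul_ite, mul_zero] using
    sum_mul_fst_of_marginal hπμ fun a => if P a then G a else 0

theorem fiberMean_fst_of_marginal {β : Type*} [DecidableEq β] (hπμ : ∀ a, ∑ b, π (a, b) = μ a)
    (κ : A → β) (G : A → ℝ) (c : β) :
    fiberMean π (fun p => κ p.1) (fun p => G p.1) c = fiberMean μ κ G c := by
  have hW := sum_filter_mul_fst_of_marginal hπμ (fun a => κ a = c) fun _ => 1
  simp only [mul_one] at hW
  rw [fiberMean, fiberMean, hW, sum_filter_mul_fst_of_marginal hπμ (fun a => κ a = c)]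

end Marginal

theorem sum_range_ite_le_mul_sub {R : Type*} [CommRing R] {t n : ℕ} (htn : t ≤ n) (c : R)
    (u : ℕ → R) :
    ∑ s ∈ range n, (if t ≤ s then c else 0) * (u (s + 1) - u s) = c * (u n - u t) := by
  induction n, htn using Nat.le_induction with
  | base =>
    rw [sub_self, mul_zero]
    exact sum_eq_zero fun s hs => by rw [if_neg (not_le.2 (mem_range.1 hs)), zero_mul]
  | succ n htn ih =>
    rw [sum_range_succ, ih, if_pos htn]
    ring

section Paths

variable {X : Type*} {T : ℕ}

def pathUpTo (t : ℕ) (x : Fin T → X) : {s : Fin T // (s : ℕ) ≤ t} → X := fun s => x s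

theorem pathUpTo_eq_iff {t : ℕ} {x x' : Fin T → X} :
    pathUpTo t x = pathUpTo t x' ↔ ∀ s : Fin T, (s : ℕ) ≤ t → x s = x' s :=
  ⟨fun h s hs => congrFun h ⟨s, hs⟩, fun h => funext fun s => h s s.2⟩

theorem pathUpTo_injective {t : ℕ} (hT : T ≤ t + 1) :
    Function.Injective (pathUpTo (X := X) (T := T) t) :=
  fun _ _ h => funext fun s => pathUpTo_eq_iff.1 h s (by omega)

theorem depOn_iff {t : ℕ} {f : (Fin T → X) → ℝ} :
    DepOn t f ↔ ∀ x x', pathUpTo t x = pathUpTo t x' → f x = f x' :=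
  forall₂_congr fun _ _ => imp_congr_left pathUpTo_eq_iff.symm

theorem DepOn.mono {s t : ℕ} (hst : s ≤ t) {f : (Fin T → X) → ℝ} (hf : DepOn s f) : DepOn t f :=
  fun z z' hz => hf z z' fun u hu => hz u (hu.trans hst)

theorem depOn_comp_pathUpTo (t : ℕ) (F : ({s : Fin T // (s : ℕ) ≤ t} → X) → ℝ) :
    DepOn t fun x => F (pathUpTo t x) :=
  depOn_iff.2 fun _ _ h => congrArg F h

theorem sum_ite_forall_le_eq {Z : Type*} [Fintype X] [DecidableEq X] [Fintype Z] (t : ℕ)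
    (a : Fin T → X) (G : (Fin T → X) × Z → ℝ) :
    (∑ p : (Fin T → X) × Z, if ∀ s : Fin T, (s : ℕ) ≤ t → p.1 s = a s then G p else 0) =
      ∑ p with pathUpTo t p.1 = pathUpTo t a, G p := by
  rw [sum_filter]
  exact sum_congr rfl fun p _ => if_congr pathUpTo_eq_iff.symm rfl rfl

theorem isMuMartingale_fiberMean [Fintype X] [DecidableEq X] {μ : (Fin T → X) → ℝ}
    (hμ : ∀ x, 0 ≤ μ x) (ψ : (Fin T → X) → ℝ) :
    IsMuMartingale μ fun s x => fiberMean μ (pathUpTo s) ψ (pathUpTo s x) := by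
  refine ⟨fun s => depOn_comp_pathUpTo s _, fun s _ φ hφ => ?_⟩
  have hproj : ∀ r, DepOn r φ →
      ∑ x, μ x * φ x * fiberMean μ (pathUpTo r) ψ (pathUpTo r x) = ∑ x, μ x * ψ x * φ x :=
    fun r hr => by
      rw [← sum_fiberMean_mul_of_fiberwise_const hμ (fun x x' h => depOn_iff.1 hr x' x h)]
      exact sum_congr rfl fun x _ => mul_right_comm _ _ _
  simp only [mul_sub, sum_sub_distrib, hproj s hφ, hproj (s + 1) (hφ.mono s.le_succ), sub_self]

end Paths

section MartingaleTest

variable {X Y : Type*} {T : ℕ} [Fintype X] [Fintype Y]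
  {μ : (Fin T → X) → ℝ} {π : (Fin T → X) × (Fin T → Y) → ℝ}

theorem sum_mul_martingale_last_eq_of_test
    (H : ∀ (h : ℕ → (Fin T → Y) → ℝ) (M : ℕ → (Fin T → X) → ℝ),
      (∀ t : ℕ, DepOn t (h t)) → IsMuMartingale μ M →
      ∑ p, π p * (∑ t ∈ range (T - 1), h t p.2 * (M (t + 1) p.1 - M t p.1)) = 0)
    {M : ℕ → (Fin T → X) → ℝ} (hM : IsMuMartingale μ M) {t : ℕ} (ht : t ≤ T - 1)
    {f : (Fin T → Y) → ℝ} (hf : DepOn t f) :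
    ∑ p, π p * f p.2 * M (T - 1) p.1 = ∑ p, π p * f p.2 * M t p.1 := by
  have hh : ∀ s, DepOn s fun y => if t ≤ s then f y else 0 := fun s z z' hz => by
    split_ifs with hts
    exacts [hf.mono hts z z' hz, rfl]
  have htelescope : ∀ p : (Fin T → X) × (Fin T → Y),
      ∑ s ∈ range (T - 1), (if t ≤ s then f p.2 else 0) * (M (s + 1) p.1 - M s p.1) =
        f p.2 * (M (T - 1) p.1 - M t p.1) :=
    fun p => sum_range_ite_le_mul_sub ht _ fun s => M s p.1
  have htest := H _ M hh hM
  simp only [htelescope] at htest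
  rw [← sub_eq_zero, ← sum_sub_distrib, ← htest]
  exact sum_congr rfl fun p _ => by ring

end MartingaleTest

section Causality

variable {X Y : Type*} {T : ℕ} [Fintype X] [Fintype Y] [DecidableEq X]
  {μ : (Fin T → X) → ℝ} {π : (Fin T → X) × (Fin T → Y) → ℝ}

theorem causalCoupling_iff :
    CausalCoupling π ↔ ∀ t : ℕ, t + 1 < T → ∀ f : (Fin T → Y) → ℝ, DepOn t f →
      ∀ (g : (Fin T → X) → ℝ) (a : Fin T → X),
        (∑ p with pathUpTo t p.1 = pathUpTo t a, π p * f p.2 * g p.1) *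
            (∑ p with pathUpTo t p.1 = pathUpTo t a, π p) =
          (∑ p with pathUpTo t p.1 = pathUpTo t a, π p * f p.2) *
            (∑ p with pathUpTo t p.1 = pathUpTo t a, π p * g p.1) := by
  simp only [CausalCoupling, sum_ite_forall_le_eq]

theorem sum_mul_increment_eq_zero_of_causal (hπpos : ∀ p, 0 ≤ π p)
    (hπμ : ∀ x, ∑ y, π (x, y) = μ x) (hc : CausalCoupling π) {t : ℕ} (ht : t + 1 < T)
    {f : (Fin T → Y) → ℝ} (hf : DepOn t f) {Δ : (Fin T → X) → ℝ}
    (hΔ : ∀ φ : (Fin T → X) → ℝ, DepOn t φ → ∑ x, μ x * φ x * Δ x = 0) :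
    ∑ p, π p * f p.2 * Δ p.1 = 0 := by
  have hfiber := fun p : (Fin T → X) × (Fin T → Y) =>
    (sum_fiber_mul_mul_eq_iff hπpos (fun p => pathUpTo t p.1) (fun p => f p.2) (fun p => Δ p.1)
      (pathUpTo t p.1)).1 (causalCoupling_iff.1 hc t ht f hf Δ p.1)
  set φ : (Fin T → X) → ℝ := fun x =>
    fiberMean π (fun p => pathUpTo t p.1) (fun p => f p.2) (pathUpTo t x)
  calc ∑ p, π p * f p.2 * Δ p.1 = ∑ p, π p * (φ p.1 * Δ p.1) := by
        rw [sum_mul_mul_eq_sum_fiberMean_mul hfiber]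
        simp only [mul_assoc, φ]
    _ = ∑ x, μ x * (φ x * Δ x) := sum_mul_fst_of_marginal hπμ fun x => φ x * Δ x
    _ = 0 := by simpa only [mul_assoc] using hΔ φ (depOn_comp_pathUpTo t _)

theorem fiber_identity_of_sum_mul_martingale_last_eq (hπpos : ∀ p, 0 ≤ π p)
    (hπμ : ∀ x, ∑ y, π (x, y) = μ x) {t : ℕ} {f : (Fin T → Y) → ℝ}
    (hmart : ∀ M : ℕ → (Fin T → X) → ℝ, IsMuMartingale μ M →
      ∑ p, π p * f p.2 * M (T - 1) p.1 = ∑ p, π p * f p.2 * M t p.1)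
    (g : (Fin T → X) → ℝ) (b : {s : Fin T // (s : ℕ) ≤ t} → X) :
    ∑ p with pathUpTo t p.1 = b, π p * g p.1 * f p.2 =
      fiberMean π (fun p => pathUpTo t p.1) (fun p => g p.1) b *
        ∑ p with pathUpTo t p.1 = b, π p * f p.2 := by
  set ψ : (Fin T → X) → ℝ := fun x => if pathUpTo t x = b then g x else 0
  have hμ : ∀ x, 0 ≤ μ x := fun x => hπμ x ▸ sum_nonneg fun y _ => hπpos (x, y)
  have key := hmart _ (isMuMartingale_fiberMean hμ ψ)
  -- `M_{T-1} = ψ` on the support of `μ`, which contains that of `π`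
  have hlast : ∀ p, π p * f p.2 * fiberMean μ (pathUpTo (T - 1)) ψ (pathUpTo (T - 1) p.1) =
      π p * f p.2 * ψ p.1 := fun p => by
    rcases eq_or_ne (π p) 0 with hp | hp
    · simp [hp]
    have hμp : μ p.1 ≠ 0 := by
      rw [← hπμ]
      exact ((hπpos p).lt_of_ne' hp |>.trans_le
        (single_le_sum (fun y _ => hπpos (p.1, y)) (mem_univ p.2))).ne'
    rw [fiberMean_of_injective (pathUpTo_injective (by omega)) ψ hμp]
  simp only [hlast, ψ, fiberMean_ite_eq] at key
  rw [fiberMean_fst_of_marginal hπμ, sum_filter, sum_filter, mul_sum]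
  convert key using 2 <;> split_ifs <;> ring

end Causality

theorem causal_iff_martingale_test_general
    {X Y : Type*} {T : ℕ} [Fintype X] [Fintype Y] [DecidableEq X]
    (μ : (Fin T → X) → ℝ) (ν : (Fin T → Y) → ℝ)
    (π : ((Fin T → X) × (Fin T → Y)) → ℝ) (hπ : IsCouplingOf μ ν π) :
    CausalCoupling π ↔
      ∀ (h : ℕ → (Fin T → Y) → ℝ) (M : ℕ → (Fin T → X) → ℝ),
        (∀ t : ℕ, DepOn t (h t)) → IsMuMartingale μ M →
        ∑ p : (Fin T → X) × (Fin T → Y),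
          π p * (∑ t ∈ Finset.range (T - 1), h t p.2 * (M (t + 1) p.1 - M t p.1)) = 0 := by
  obtain ⟨hπpos, hπμ, -⟩ := hπ
  refine ⟨fun hc h M hh hM => ?_, fun H => causalCoupling_iff.2 fun t ht f hf g a => ?_⟩
  · simp_rw [mul_sum]
    rw [sum_comm]
    refine sum_eq_zero fun t ht => ?_
    have htT : t + 1 < T := by
      have := mem_range.1 ht
      omega
    simpa only [mul_assoc] using
      sum_mul_increment_eq_zero_of_causal hπpos hπμ hc htT (hh t) (hM.2 t htT)
  · have key := (sum_fiber_mul_mul_eq_iff hπpos _ (fun p => g p.1) (fun p => f p.2) _).2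
      (fiber_identity_of_sum_mul_martingale_last_eq hπpos hπμ
        (fun M hM => sum_mul_martingale_last_eq_of_test H hM (by omega) hf) g (pathUpTo t a))
    simp only [mul_right_comm _ (g _) (f _)] at key
    rw [key, mul_comm]

/-- A coupling `π` of `μ` and `ν` on product path space is causal if and only if
`E^π[∑_{t} h_t(y_{≤t}) ΔM_{t+1}(x_{≤t+1})] = 0` for all adapted test functions
`h` and all `μ`-martingales `M`, where `ΔM_{t+1} = M_{t+1} - M_t`. -/
theorem causal_iff_martingale_test
    {X Y : Type*} {T : ℕ} [Fintype X] [Fintype Y] [DecidableEq X]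
    (μ : (Fin T → X) → ℝ) (ν : (Fin T → Y) → ℝ)
    (hμpos : ∀ x, 0 ≤ μ x) (hμsum : ∑ x, μ x = 1)
    (hνpos : ∀ y, 0 ≤ ν y) (hνsum : ∑ y, ν y = 1)
    (π : ((Fin T → X) × (Fin T → Y)) → ℝ) (hπ : IsCouplingOf μ ν π) :
    CausalCoupling π ↔
      ∀ (h : ℕ → (Fin T → Y) → ℝ) (M : ℕ → (Fin T → X) → ℝ),
        (∀ t : ℕ, DepOn t (h t)) → IsMuMartingale μ M →
        ∑ p : (Fin T → X) × (Fin T → Y),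
          π p * (∑ t ∈ Finset.range (T - 1), h t p.2 * (M (t + 1) p.1 - M t p.1)) = 0 :=
  causal_iff_martingale_test_general μ ν π hπ
end

section
/- The function l(x,y) = ∑_{t=1}^{T-1} h_t(y_{≤t}) ΔM_{t+1}(x_{≤t+1}) has E^π[l] = 0 for every causal coupling π whenever h_t are bounded measurable adapted functions and M is a μ-martingale; in particular E^{μ⊗ν}[l] = 0 for the independent coupling. -/
open scoped BigOperators

/-!
Fix a time `t < T - 1` and a cylinder `C = {x_{≤t} = a_{≤t}}`. The martingale property
gives `E^π[1_C ΔM_{t+1}] = E^μ[1_C ΔM_{t+1}] = 0`, and causality factorises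
`E^π[1_C h_t ΔM_{t+1}] · π(C) = E^π[1_C h_t] · E^π[1_C ΔM_{t+1}]`. Hence
`E^π[1_C h_t ΔM_{t+1}]` vanishes when `π(C) > 0`, and trivially when `π(C) = 0`.
Summing over the cylinders and over `t` gives `E^π[l] = 0`. Under `μ ⊗ ν` the expectation
of each term factorises directly as `E^ν[h_t] · E^μ[ΔM_{t+1}] = 0`.
-/

open Finset

theorem Fintype.sum_eq_zero_of_forall_fiber_sum_eq_zero {α γ M : Type*} [Fintype α]
    [DecidableEq γ] [AddCommMonoid M] (ρ : α → γ) (F : α → M)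
    (h : ∀ b, ∑ p with ρ p = ρ b, F p = 0) : ∑ p, F p = 0 := by
  rw [← sum_fiberwise_of_maps_to (t := univ.image ρ) fun p _ => mem_image_of_mem ρ (mem_univ p)]
  refine Finset.sum_eq_zero fun u hu => ?_
  obtain ⟨b, -, rfl⟩ := mem_image.1 hu
  exact h b

theorem sum_ite_mul_eq_zero_of_sum_ite_eq_zero {α : Type*} [Fintype α] {w : α → ℝ}
    (hw : ∀ x, 0 ≤ w x) (P : α → Prop) [DecidablePred P] (F : α → ℝ)
    (h : ∑ x, (if P x then w x else 0) = 0) :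
    ∑ x, (if P x then w x * F x else 0) = 0 := by
  rw [← sum_filter] at h ⊢
  rw [sum_eq_zero_iff_of_nonneg fun x _ => hw x] at h
  exact sum_eq_zero fun x hx => by rw [h x hx, zero_mul]

theorem sum_mul_comp_fst_of_fst_marginal {A B : Type*} [Fintype A] [Fintype B]
    {μ : A → ℝ} {π : A × B → ℝ} (hπ : ∀ a, ∑ b, π (a, b) = μ a) (F : A → ℝ) :
    ∑ p, π p * F p.1 = ∑ a, μ a * F a := by
  simp_rw [Fintype.sum_prod_type, ← sum_mul, hπ]

theorem sum_mul_sum_range_eq_zero {α : Type*} [Fintype α] {T : ℕ} {w : α → ℝ}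
    {G : ℕ → α → ℝ} (hG : ∀ t, t + 1 < T → ∑ p, w p * G t p = 0) :
    ∑ p, w p * ∑ t ∈ range (T - 1), G t p = 0 := by
  simp_rw [mul_sum]
  rw [sum_comm]
  exact sum_eq_zero fun t ht => hG t (by rw [mem_range] at ht; omega)

section PathSpace

variable {X Y : Type*} {T : ℕ}

theorem sum_eq_zero_of_forall_cylinder_sum_eq_zero [DecidableEq X] {α : Type*} [Fintype α]
    (t : ℕ) (k : α → Fin T → X) (F : α → ℝ)
    (h : ∀ a : Fin T → X,
      ∑ p, (if ∀ s : Fin T, (s : ℕ) ≤ t → k p s = a s then F p else 0) = 0) :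
    ∑ p, F p = 0 := by
  refine Fintype.sum_eq_zero_of_forall_fiber_sum_eq_zero
    (fun p (s : {s : Fin T // (s : ℕ) ≤ t}) => k p s) F fun b => ?_
  simpa only [sum_filter, funext_iff, Subtype.forall] using h (k b)

theorem depOn_cylinder_indicator [DecidableEq X] (t : ℕ) (a : Fin T → X) :
    DepOn t fun x : Fin T → X =>
      if ∀ s : Fin T, (s : ℕ) ≤ t → x s = a s then (1 : ℝ) else 0 :=
  fun z z' hz => if_congr (forall₂_congr fun s hs => by rw [hz s hs]) rfl rfl

theorem IsMuMartingale.sum_cylinder_coupling_mul_increment_eq_zero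
    [Fintype X] [Fintype Y] [DecidableEq X] {μ : (Fin T → X) → ℝ} {M : ℕ → (Fin T → X) → ℝ}
    (hM : IsMuMartingale μ M)
    {π : (Fin T → X) × (Fin T → Y) → ℝ} (hπ : ∀ a, ∑ b, π (a, b) = μ a)
    {t : ℕ} (ht : t + 1 < T) (a : Fin T → X) :
    ∑ p : (Fin T → X) × (Fin T → Y),
      (if ∀ s : Fin T, (s : ℕ) ≤ t → p.1 s = a s then
        π p * (M (t + 1) p.1 - M t p.1) else 0) = 0 := by
  set φ := fun x : Fin T → X =>
    if ∀ s : Fin T, (s : ℕ) ≤ t → x s = a s then (1 : ℝ) else 0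
  calc _ = ∑ p : (Fin T → X) × (Fin T → Y), π p * (φ p.1 * (M (t + 1) p.1 - M t p.1)) :=
        sum_congr rfl fun p _ => by simp only [φ, ite_mul, one_mul, zero_mul, mul_ite, mul_zero]
    _ = ∑ x, μ x * (φ x * (M (t + 1) x - M t x)) :=
        sum_mul_comp_fst_of_fst_marginal hπ fun x => φ x * (M (t + 1) x - M t x)
    _ = 0 := by simpa only [mul_assoc] using hM.2 t ht φ (depOn_cylinder_indicator t a)

theorem CausalCoupling.sum_cylinder_mul_eq_zero [Fintype X] [Fintype Y] [DecidableEq X]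
    {π : (Fin T → X) × (Fin T → Y) → ℝ} (hcausal : CausalCoupling π) (hπ : ∀ p, 0 ≤ π p)
    {t : ℕ} (ht : t + 1 < T) {f : (Fin T → Y) → ℝ} (hf : DepOn t f) (g : (Fin T → X) → ℝ) (a : Fin T → X)
    (hg : ∑ p : (Fin T → X) × (Fin T → Y),
      (if ∀ s : Fin T, (s : ℕ) ≤ t → p.1 s = a s then π p * g p.1 else 0) = 0) :
    ∑ p : (Fin T → X) × (Fin T → Y),
      (if ∀ s : Fin T, (s : ℕ) ≤ t → p.1 s = a s then π p * (f p.2 * g p.1) else 0) = 0 := by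
  have factorised := hcausal t ht f hf g a
  rw [hg, mul_zero] at factorised
  obtain hfg | hmass := mul_eq_zero.1 factorised
  · simpa only [mul_assoc] using hfg
  · exact sum_ite_mul_eq_zero_of_sum_ite_eq_zero hπ _ _ hmass

theorem CausalCoupling.sum_mul_increment_eq_zero [Fintype X] [Fintype Y] [DecidableEq X]
    {μ : (Fin T → X) → ℝ} {M : ℕ → (Fin T → X) → ℝ} (hM : IsMuMartingale μ M)
    {π : (Fin T → X) × (Fin T → Y) → ℝ} (hcausal : CausalCoupling π)
    (hπpos : ∀ p, 0 ≤ π p) (hπ : ∀ a, ∑ b, π (a, b) = μ a)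
    {t : ℕ} (ht : t + 1 < T) {f : (Fin T → Y) → ℝ} (hf : DepOn t f) :
    ∑ p, π p * (f p.2 * (M (t + 1) p.1 - M t p.1)) = 0 :=
  sum_eq_zero_of_forall_cylinder_sum_eq_zero t Prod.fst _ fun a =>
    hcausal.sum_cylinder_mul_eq_zero hπpos ht hf (fun x => M (t + 1) x - M t x) a
      (hM.sum_cylinder_coupling_mul_increment_eq_zero hπ ht a)

theorem IsMuMartingale.sum_prod_mul_increment_eq_zero [Fintype X] [Fintype Y]
    {μ : (Fin T → X) → ℝ} {M : ℕ → (Fin T → X) → ℝ} (hM : IsMuMartingale μ M)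
    (ν : (Fin T → Y) → ℝ) {t : ℕ} (ht : t + 1 < T) (f : (Fin T → Y) → ℝ) :
    ∑ p : (Fin T → X) × (Fin T → Y),
      μ p.1 * ν p.2 * (f p.2 * (M (t + 1) p.1 - M t p.1)) = 0 := by
  have hmean : ∑ x, μ x * (M (t + 1) x - M t x) = 0 := by
    simpa only [mul_one] using hM.2 t ht (fun _ => 1) fun _ _ _ => rfl
  calc _ = (∑ x, μ x * (M (t + 1) x - M t x)) * ∑ y, ν y * f y := by
        simp_rw [Fintype.sum_prod_type, sum_mul_sum]
        exact sum_congr rfl fun x _ => sum_congr rfl fun y _ => by ring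
    _ = 0 := by rw [hmean, zero_mul]

end PathSpace

theorem causal_test_function_zero_expectation_general
    {X Y : Type*} {T : ℕ} [Fintype X] [Fintype Y] [DecidableEq X]
    (μ : (Fin T → X) → ℝ) (ν : (Fin T → Y) → ℝ)
    (h : ℕ → (Fin T → Y) → ℝ) (hadap : ∀ t : ℕ, DepOn t (h t))
    (M : ℕ → (Fin T → X) → ℝ) (hM : IsMuMartingale μ M)
    (π : ((Fin T → X) × (Fin T → Y)) → ℝ)
    (hπ : IsCouplingOf μ ν π) (hcausal : CausalCoupling π) :
    (∑ p : (Fin T → X) × (Fin T → Y),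
        π p * ∑ t ∈ Finset.range (T - 1), h t p.2 * (M (t + 1) p.1 - M t p.1)) = 0 ∧
    (∑ p : (Fin T → X) × (Fin T → Y),
        (μ p.1 * ν p.2) * ∑ t ∈ Finset.range (T - 1),
          h t p.2 * (M (t + 1) p.1 - M t p.1)) = 0 :=
  ⟨sum_mul_sum_range_eq_zero fun t ht =>
      hcausal.sum_mul_increment_eq_zero hM hπ.1 hπ.2.1 ht (hadap t),
    sum_mul_sum_range_eq_zero fun t ht => hM.sum_prod_mul_increment_eq_zero ν ht (h t)⟩

/-- For `l(x,y) = ∑_{t=1}^{T-1} h_t(y_{≤t}) ΔM_{t+1}(x_{≤t+1})` with `h_t`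
bounded adapted and `M` a `μ`-martingale, `E^π[l] = 0` for every causal
coupling `π`; in particular `E^{μ⊗ν}[l] = 0` for the independent coupling. -/
theorem causal_test_function_zero_expectation
    {X Y : Type*} {T : ℕ} [Fintype X] [Fintype Y] [DecidableEq X]
    (μ : (Fin T → X) → ℝ) (ν : (Fin T → Y) → ℝ)
    (hμpos : ∀ x, 0 ≤ μ x) (hμsum : ∑ x, μ x = 1)
    (hνpos : ∀ y, 0 ≤ ν y) (hνsum : ∑ y, ν y = 1)
    (h : ℕ → (Fin T → Y) → ℝ) (hadap : ∀ t : ℕ, DepOn t (h t))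
    (M : ℕ → (Fin T → X) → ℝ) (hM : IsMuMartingale μ M)
    (π : ((Fin T → X) × (Fin T → Y)) → ℝ)
    (hπ : IsCouplingOf μ ν π) (hcausal : CausalCoupling π) :
    (∑ p : (Fin T → X) × (Fin T → Y),
        π p * ∑ t ∈ Finset.range (T - 1), h t p.2 * (M (t + 1) p.1 - M t p.1)) = 0 ∧
    (∑ p : (Fin T → X) × (Fin T → Y),
        (μ p.1 * ν p.2) * ∑ t ∈ Finset.range (T - 1),
          h t p.2 * (M (t + 1) p.1 - M t p.1)) = 0 :=
  causal_test_function_zero_expectation_general μ ν h hadap M hM π hπ hcausal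
end

section
/- For a concave function H and linear functional π ↦ E^π[c] on a compact convex set Π, with a convex cone L of linear functionals satisfying sup_{l∈L} E^π[l] ∈ {0, +∞} with value 0 exactly on a convex compact subset Π₀ ⊆ Π, one has inf_{π∈Π₀} {E^π[c] - εH(π)} = sup_{l∈L} inf_{π∈Π} {E^π[c + l] - εH(π)}. -/
/-!
Work in `EReal`. For `π ∈ S`, the supremum over `l ∈ L` of `E^π[c + l] - εH(π)` is
`E^π[c] - εH(π)` on `S₀` and `+∞` off `S₀`, so the infimum over `S` of this supremum is the
left-hand side. The integrand is continuous and convex in `π` on the compact convex set `S` and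
affine in `l` on the convex set `L`, so Sion's minimax theorem exchanges the infimum and the
supremum. Finally, real `sInf`/`sSup` of bounded nonempty sets agree with their `EReal` versions.
-/

open Set

theorem EReal.iSup_coe_add {κ : Sort*} (a : ℝ) (x : κ → ℝ) :
    ⨆ i, ((a + x i : ℝ) : EReal) = a + ⨆ i, (x i : EReal) := by
  refine le_antisymm (iSup_le fun i => ?_) (EReal.add_le_of_forall_lt fun a' ha' b' hb' => ?_)
  · rw [EReal.coe_add]
    gcongr
    exact le_iSup (fun i => (x i : EReal)) i
  · obtain ⟨i, hi⟩ := lt_iSup_iff.mp hb'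
    calc a' + b' ≤ a + x i := add_le_add ha'.le hi.le
      _ ≤ ⨆ i, ((a + x i : ℝ) : EReal) := le_iSup (fun i => ((a + x i : ℝ) : EReal)) i

theorem EReal.coe_sInf_image {α : Type*} {s : Set α} {g : α → ℝ} (hs : s.Nonempty)
    (hg : BddBelow (g '' s)) : ((sInf (g '' s) : ℝ) : EReal) = ⨅ x ∈ s, (g x : EReal) := by
  rw [Monotone.map_csInf_of_continuousAt continuous_coe_real_ereal.continuousAt
    EReal.coe_strictMono.monotone (hs.image g) hg, ← image_comp, sInf_image]
  rfl

theorem EReal.coe_sSup_image {α : Type*} {s : Set α} {g : α → ℝ} (hs : s.Nonempty)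
    (hg : BddAbove (g '' s)) : ((sSup (g '' s) : ℝ) : EReal) = ⨆ x ∈ s, (g x : EReal) := by
  rw [Monotone.map_csSup_of_continuousAt continuous_coe_real_ereal.continuousAt
    EReal.coe_strictMono.monotone (hs.image g) hg, ← image_comp, sSup_image]
  rfl

theorem biInf_eq_biInf_of_eq_top {α β : Type*} [CompleteLattice β] {s t : Set α} {g : α → β}
    (hts : t ⊆ s) (htop : ∀ x ∈ s, x ∉ t → g x = ⊤) : ⨅ x ∈ s, g x = ⨅ x ∈ t, g x := by
  refine le_antisymm (biInf_mono hts) (le_iInf₂ fun x hx => ?_)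
  by_cases hxt : x ∈ t
  · exact iInf₂_le x hxt
  · rw [htop x hx hxt]
    exact le_top

theorem Sion.minimax_coe_ereal {E F : Type*}
    [TopologicalSpace E] [AddCommGroup E] [Module ℝ E] [IsTopologicalAddGroup E]
    [ContinuousSMul ℝ E] [TopologicalSpace F] [AddCommGroup F] [Module ℝ F]
    [IsTopologicalAddGroup F] [ContinuousSMul ℝ F]
    {X : Set E} {Y : Set F} {f : E → F → ℝ}
    (ne_X : X.Nonempty) (cX : Convex ℝ X) (kX : IsCompact X) (cY : Convex ℝ Y)
    (hfy : ∀ y ∈ Y, LowerSemicontinuousOn (fun x => f x y) X)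
    (hfy' : ∀ y ∈ Y, QuasiconvexOn ℝ X fun x => f x y)
    (hfx : ∀ x ∈ X, UpperSemicontinuousOn (fun y => f x y) Y)
    (hfx' : ∀ x ∈ X, QuasiconcaveOn ℝ Y fun y => f x y) :
    ⨅ x ∈ X, ⨆ y ∈ Y, (f x y : EReal) = ⨆ y ∈ Y, ⨅ x ∈ X, (f x y : EReal) :=
  have hcoe := EReal.coe_strictMono.monotone
  minimax' ne_X cX kX
    (fun y hy => continuous_coe_real_ereal.comp_lowerSemicontinuousOn (hfy y hy) hcoe)
    (fun y hy => (hfy' y hy).monotone_comp (g := Real.toEReal) hcoe) cY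
    (fun x hx => continuous_coe_real_ereal.comp_upperSemicontinuousOn (hfx x hx) hcoe)
    (fun x hx => (hfx' x hx).monotone_comp (g := Real.toEReal) hcoe)

theorem minimax_add_dotProduct {ι : Type*} [Fintype ι] {S L : Set (ι → ℝ)} {F : (ι → ℝ) → ℝ}
    (hSne : S.Nonempty) (hSconv : Convex ℝ S) (hScomp : IsCompact S) (hLconv : Convex ℝ L)
    (hFcont : ContinuousOn F S) (hFconv : ConvexOn ℝ S F) :
    ⨅ π ∈ S, ⨆ l ∈ L, ((F π + π ⬝ᵥ l : ℝ) : EReal) =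
      ⨆ l ∈ L, ⨅ π ∈ S, ((F π + π ⬝ᵥ l : ℝ) : EReal) :=
  Sion.minimax_coe_ereal hSne hSconv hScomp hLconv
    (fun _ _ => (hFcont.add (by fun_prop)).lowerSemicontinuousOn)
    (fun l _ => (hFconv.add (((dotProductBilin ℝ ℝ).flip l).convexOn hSconv)).quasiconvexOn)
    (fun _ _ => (by fun_prop : Continuous _).continuousOn.upperSemicontinuousOn)
    (fun π _ => ((concaveOn_const (F π) hLconv).add
      ((dotProductBilin ℝ ℝ π).concaveOn hLconv)).quasiconcaveOn)

theorem biInf_biSup_add_eq_biInf_of_indicator {α κ : Type*} {S S₀ : Set α} {L : Set κ}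
    (hsub : S₀ ⊆ S) (g : α → ℝ) (p : α → κ → ℝ)
    (hp₀ : ∀ x ∈ S₀, ⨆ l : L, (p x l : EReal) = 0)
    (hp₁ : ∀ x ∈ S, x ∉ S₀ → ⨆ l : L, (p x l : EReal) = ⊤) :
    ⨅ x ∈ S, ⨆ l ∈ L, ((g x + p x l : ℝ) : EReal) = ⨅ x ∈ S₀, (g x : EReal) := by
  have hsplit (x : α) : ⨆ l ∈ L, ((g x + p x l : ℝ) : EReal) = g x + ⨆ l : L, (p x l : EReal) := by
    rw [iSup_subtype', EReal.iSup_coe_add]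
  simp only [hsplit]
  rw [biInf_eq_biInf_of_eq_top hsub fun x hx hx₀ => by
    rw [hp₁ x hx hx₀, EReal.coe_add_top]]
  refine iInf_congr fun x => iInf_congr fun hx => ?_
  rw [hp₀ x hx, add_zero]

theorem Real.sSup_image_eq_of_coe_biSup_eq {α : Type*} {s : Set α} {g : α → ℝ} {m : ℝ}
    (hs : s.Nonempty) (h : ⨆ x ∈ s, (g x : EReal) = m) : sSup (g '' s) = m := by
  have hbdd : BddAbove (g '' s) := ⟨m, forall_mem_image.mpr fun x hx =>
    EReal.coe_le_coe_iff.mp (h ▸ le_iSup₂ (f := fun x _ => (g x : EReal)) x hx)⟩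
  exact EReal.coe_injective ((EReal.coe_sSup_image hs hbdd).trans h)

theorem abstract_minimax_causal_reformulation_general
    {ι : Type*} [Fintype ι]
    (S S₀ : Set (ι → ℝ))
    (hScomp : IsCompact S) (hSconv : Convex ℝ S) (hSne : S.Nonempty)
    (hsub : S₀ ⊆ S)
    (hS₀ne : S₀.Nonempty)
    (H : (ι → ℝ) → ℝ) (hHcont : ContinuousOn H S) (hHconc : ConcaveOn ℝ S H)
    (c : ι → ℝ) (ε : ℝ) (hε : 0 ≤ ε)
    (L : Set (ι → ℝ)) (hLconv : Convex ℝ L)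
    (hchar0 : ∀ π ∈ S₀,
      (⨆ l : L, ((∑ i, π i * (l : ι → ℝ) i : ℝ) : EReal)) = 0)
    (hchar1 : ∀ π ∈ S, π ∉ S₀ →
      (⨆ l : L, ((∑ i, π i * (l : ι → ℝ) i : ℝ) : EReal)) = ⊤) :
    sInf ((fun π => (∑ i, π i * c i) - ε * H π) '' S₀)
      = sSup {r : ℝ | ∃ l ∈ L,
          r = sInf ((fun π => (∑ i, π i * (c i + l i)) - ε * H π) '' S)} := by
  set F : (ι → ℝ) → ℝ := fun π => (∑ i, π i * c i) - ε * H π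
  have hshift (l π : ι → ℝ) : ∑ i, π i * (c i + l i) - ε * H π = F π + π ⬝ᵥ l := by
    simp only [F, dotProduct, mul_add, Finset.sum_add_distrib]
    ring
  have hFcont : ContinuousOn F S := by fun_prop
  have hFconv : ConvexOn ℝ S F :=
    (((dotProductBilin ℝ ℝ).flip c).convexOn hSconv).sub (hHconc.smul hε)
  have hL : L.Nonempty := by
    by_contra hL
    obtain ⟨π, hπ⟩ := hS₀ne
    simpa [not_nonempty_iff_eq_empty.mp hL] using hchar0 π hπ
  have hminimax := minimax_add_dotProduct (L := L) hSne hSconv hScomp hLconv hFcont hFconv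
  rw [biInf_biSup_add_eq_biInf_of_indicator hsub F (fun π l => π ⬝ᵥ l) hchar0 hchar1,
    ← EReal.coe_sInf_image hS₀ne ((hScomp.image_of_continuousOn hFcont).bddBelow.mono
      (image_mono hsub))] at hminimax
  have hinner (l : ι → ℝ) : ⨅ π ∈ S, ((F π + π ⬝ᵥ l : ℝ) : EReal) =
      ↑(sInf ((fun π => F π + π ⬝ᵥ l) '' S)) :=
    (EReal.coe_sInf_image hSne
      (hScomp.image_of_continuousOn (hFcont.add (by fun_prop))).bddBelow).symm
  simp only [hinner] at hminimax
  rw [← Real.sSup_image_eq_of_coe_biSup_eq hL hminimax.symm]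
  simp only [hshift, image, eq_comm]

/-- Abstract minimax principle underlying the reformulation of regularized
causal optimal transport: for a concave continuous `H` and the linear
functional `π ↦ E^π[c] = ∑ i, π i * c i` on a compact convex set `S` (inside a
finite-dimensional simplex), with a convex cone `L` of linear functionals such
that `sup_{l ∈ L} E^π[l]` is `0` exactly on a convex compact subset `S₀ ⊆ S`
and `+∞` elsewhere on `S`, one has
`inf_{π ∈ S₀} {E^π[c] - εH(π)} = sup_{l ∈ L} inf_{π ∈ S} {E^π[c+l] - εH(π)}`. -/
theorem abstract_minimax_causal_reformulation
    {ι : Type*} [Fintype ι]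
    (S S₀ : Set (ι → ℝ))
    (hScomp : IsCompact S) (hSconv : Convex ℝ S) (hSne : S.Nonempty)
    (hSsimplex : ∀ π ∈ S, (∀ i, 0 ≤ π i) ∧ ∑ i, π i = 1)
    (hsub : S₀ ⊆ S) (hS₀comp : IsCompact S₀) (hS₀conv : Convex ℝ S₀)
    (hS₀ne : S₀.Nonempty)
    (H : (ι → ℝ) → ℝ) (hHcont : ContinuousOn H S) (hHconc : ConcaveOn ℝ S H)
    (c : ι → ℝ) (ε : ℝ) (hε : 0 ≤ ε)
    (L : Set (ι → ℝ)) (hLconv : Convex ℝ L)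
    (hLcone : ∀ l ∈ L, ∀ a : ℝ, 0 ≤ a → a • l ∈ L)
    (hchar0 : ∀ π ∈ S₀,
      (⨆ l : L, ((∑ i, π i * (l : ι → ℝ) i : ℝ) : EReal)) = 0)
    (hchar1 : ∀ π ∈ S, π ∉ S₀ →
      (⨆ l : L, ((∑ i, π i * (l : ι → ℝ) i : ℝ) : EReal)) = ⊤) :
    sInf ((fun π => (∑ i, π i * c i) - ε * H π) '' S₀)
      = sSup {r : ℝ | ∃ l ∈ L,
          r = sInf ((fun π => (∑ i, π i * (c i + l i)) - ε * H π) '' S)} :=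
  abstract_minimax_causal_reformulation_general S S₀ hScomp hSconv hSne hsub hS₀ne H hHcont hHconc c
    ε hε L hLconv hchar0 hchar1
end
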